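/- Abstraction-permutation preserves typing with exact sizes: for any distant context D and term t, Γ ⊢ D⟨λx.t⟩ : σ with derivation size n in ∩J if and only if Γ ⊢ λx.D⟨t⟩ : σ with derivation size n. -/

import Mathlib

/-- λJ-terms: t ::= x | λx.t | t(u, y.r) (generalized application, y bound in r). -/
inductive Tm : Type
  | var : ℕ → Tm
  | lam : ℕ → Tm → Tm
  | gapp : Tm → Tm → ℕ → Tm → Tm
  deriving DecidableEq

namespace Tm

/-- Free variables. -/
def fv : Tm → Finset ℕ
  | var x => {x}
  | lam x t => fv t \ {x}
  | gapp t u y r => fv t ∪ fv u ∪ (fv r \ {y})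

/-- Substitution [u/x]t (under the Barendregt convention). -/
def sub (u : Tm) (x : ℕ) : Tm → Tm
  | var y => if y = x then u else var y
  | lam y t => if y = x then lam y t else lam y (sub u x t)
  | gapp t u' y r =>
      gapp (sub u x t) (sub u x u') y (if y = x then r else sub u x r)

end Tm

/-- Distant contexts D ::= ◇ | t(u, y.D). -/
inductive DCtx : Type
  | hole : DCtx
  | gapp : Tm → Tm → ℕ → DCtx → DCtx

/-- Plugging a term into a distant context. -/
def DCtx.fill : DCtx → Tm → Tm
  | .hole, t => t
  | .gapp s u y D, t => Tm.gapp s u y (D.fill t)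

/-- A term has abstraction shape iff it is D⟨λx.s⟩. -/
def AbsShape (t : Tm) : Prop := ∃ D x s, t = DCtx.fill D (Tm.lam x s)

/-- dβ-reduction: D⟨λx.t⟩(u, y.r) → [[u/x](D⟨t⟩)/y]r, closed under all contexts. -/
inductive Dbeta : Tm → Tm → Prop
  | root (D : DCtx) (x : ℕ) (t u : Tm) (y : ℕ) (r : Tm) :
      Dbeta (Tm.gapp (D.fill (Tm.lam x t)) u y r)
            (Tm.sub (Tm.sub u x (D.fill t)) y r)
  | lam (x : ℕ) {t t' : Tm} : Dbeta t t' → Dbeta (Tm.lam x t) (Tm.lam x t')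
  | gapp₁ {t t'} (u : Tm) (y : ℕ) (r : Tm) :
      Dbeta t t' → Dbeta (Tm.gapp t u y r) (Tm.gapp t' u y r)
  | gapp₂ (t : Tm) {u u'} (y : ℕ) (r : Tm) :
      Dbeta u u' → Dbeta (Tm.gapp t u y r) (Tm.gapp t u' y r)
  | gapp₃ (t u : Tm) (y : ℕ) {r r'} :
      Dbeta r r' → Dbeta (Tm.gapp t u y r) (Tm.gapp t u y r')

/-- Strong normalization of a term w.r.t. a reduction relation. -/
def SNOf (R : Tm → Tm → Prop) (t : Tm) : Prop := Acc (fun a b => R b a) t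

/-- dβ-normal form. -/
def DbetaNF (t : Tm) : Prop := ∀ t', ¬ Dbeta t t'

mutual
  /-- Grammar 𝚖_var ::= x | 𝚖_var(𝚖, y.𝚖_var). -/
  inductive Mvar : Tm → Prop
    | var (x : ℕ) : Mvar (.var x)
    | gapp {t u r : Tm} (y : ℕ) : Mvar t → Mnf u → Mvar r → Mvar (.gapp t u y r)
  /-- Grammar 𝚖 ::= x | λx.𝚖 | 𝚖_var(𝚖, y.𝚖). -/
  inductive Mnf : Tm → Prop
    | var (x : ℕ) : Mnf (.var x)
    | lam (x : ℕ) {t : Tm} : Mnf t → Mnf (.lam x t)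
    | gapp {t u r : Tm} (y : ℕ) : Mvar t → Mnf u → Mnf r → Mnf (.gapp t u y r)
end

/-- Neutral terms 𝚗 ::= x | 𝚗(u, y.𝚗). -/
inductive Neutral : Tm → Prop
  | var (x : ℕ) : Neutral (.var x)
  | gapp {t r : Tm} (u : Tm) (y : ℕ) : Neutral t → Neutral r → Neutral (.gapp t u y r)

/-- Answers 𝚊 ::= λx.t | 𝚗(u, y.𝚊). -/
inductive Answer : Tm → Prop
  | lam (x : ℕ) (t : Tm) : Answer (.lam x t)
  | gapp {t r : Tm} (u : Tm) (y : ℕ) : Neutral t → Answer r → Answer (.gapp t u y r)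

/-- D_n : distant contexts whose left components are neutral. -/
def DCtx.NeutralLeft : DCtx → Prop
  | .hole => True
  | .gapp s _ _ D => Neutral s ∧ D.NeutralLeft

/-- Weak-head contexts W ::= ◇ | W(u, y.r) | 𝚗(u, y.W). -/
inductive WCtx : Type
  | hole : WCtx
  | appL : WCtx → Tm → ℕ → Tm → WCtx
  | appR : Tm → Tm → ℕ → WCtx → WCtx

def WCtx.fill : WCtx → Tm → Tm
  | .hole, t => t
  | .appL W u y r, t => Tm.gapp (W.fill t) u y r
  | .appR n u y W, t => Tm.gapp n u y (W.fill t)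

/-- Well-formedness: left components of appR must be neutral. -/
def WCtx.Wf : WCtx → Prop
  | .hole => True
  | .appL W _ _ _ => W.Wf
  | .appR n _ _ W => Neutral n ∧ W.Wf

/-- Weak-head reduction: root dβ-rule with neutral distant context, under weak-head contexts. -/
inductive Wh : Tm → Tm → Prop
  | step (W : WCtx) (hW : W.Wf) (D : DCtx) (hD : D.NeutralLeft)
      (x : ℕ) (t u : Tm) (y : ℕ) (r : Tm) :
      Wh (W.fill (Tm.gapp (D.fill (Tm.lam x t)) u y r))
         (W.fill (Tm.sub (Tm.sub u x (D.fill t)) y r))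

/-- Weak-head normal form. -/
def WhNF (t : Tm) : Prop := ∀ t', ¬ Wh t t'

/-- Inductive characterization of dβ-strong normalization. -/
inductive ISN : Tm → Prop
  | snvar (x : ℕ) : ISN (.var x)
  | snabs {s : Tm} (x : ℕ) : ISN s → ISN (.lam x s)
  | snapp {n u r : Tm} {x : ℕ} : Neutral n → ISN n → ISN u → ISN r →
      WhNF (.gapp n u x r) → ISN (.gapp n u x r)
  | snbeta {W : WCtx} {D : DCtx} {x : ℕ} {s u : Tm} {y : ℕ} {r : Tm} :
      W.Wf → D.NeutralLeft →
      ISN (W.fill (Tm.sub (Tm.sub u x (D.fill s)) y r)) →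
      ISN (D.fill s) → ISN u →
      ISN (W.fill (Tm.gapp (D.fill (Tm.lam x s)) u y r))

/-- Simple types. -/
inductive Ty : Type
  | base : ℕ → Ty
  | arrow : Ty → Ty → Ty

/-- Simple typing for λJ. -/
inductive STyped : (ℕ → Ty) → Tm → Ty → Prop
  | var (Γ : ℕ → Ty) (x : ℕ) : STyped Γ (.var x) (Γ x)
  | abs {Γ : ℕ → Ty} {x : ℕ} {t : Tm} {τ : Ty} (σ : Ty) :
      STyped (Function.update Γ x σ) t τ → STyped Γ (.lam x t) (.arrow σ τ)
  | app {Γ : ℕ → Ty} {t u : Tm} {y : ℕ} {r : Tm} {σ τ ρ : Ty} :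
      STyped Γ t (.arrow σ τ) → STyped Γ u σ →
      STyped (Function.update Γ y τ) r ρ → STyped Γ (.gapp t u y r) ρ

/-- λ-calculus terms. -/
inductive Lm : Type
  | var : ℕ → Lm
  | lam : ℕ → Lm → Lm
  | app : Lm → Lm → Lm

/-- Substitution [u/x]M on λ-terms. -/
def Lm.sub (u : Lm) (x : ℕ) : Lm → Lm
  | .var y => if y = x then u else .var y
  | .lam y t => if y = x then .lam y t else .lam y (Lm.sub u x t)
  | .app t s => .app (Lm.sub u x t) (Lm.sub u x s)

/-- β ∪ σ₁ reduction on λ-terms. -/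
inductive BetaSigma : Lm → Lm → Prop
  | beta (x : ℕ) (M N : Lm) : BetaSigma (.app (.lam x M) N) (Lm.sub N x M)
  | sigma (x : ℕ) (M N P : Lm) :
      BetaSigma (.app (.app (.lam x M) N) P) (.app (.lam x (.app M P)) N)
  | lam (x : ℕ) {t t'} : BetaSigma t t' → BetaSigma (.lam x t) (.lam x t')
  | app₁ {t t'} (s : Lm) : BetaSigma t t' → BetaSigma (.app t s) (.app t' s)
  | app₂ (t : Lm) {s s'} : BetaSigma s s' → BetaSigma (.app t s) (.app t s')

/-- The translation (·)* of λJ into the λ-calculus. -/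
def star : Tm → Lm
  | .var x => .var x
  | .lam x t => .lam x (star t)
  | .gapp t u y r => .app (.lam y (star r)) (.app (star t) (star u))

/-- Non-idempotent intersection types: σ ::= a | M → σ with M a (multi)set of types. -/
inductive ITy : Type
  | base : ℕ → ITy
  | arrow : List ITy → ITy → ITy

/-- Typing environments: relevant maps from variables to multisets of types. -/
def IEnv : Type := ℕ → List ITy

/-- Pointwise multiset union of environments. -/
def envAdd (Γ Δ : IEnv) : IEnv := fun z => Γ z ++ Δ z

/-- Empty environment. -/
def envEmpty : IEnv := fun _ => []

/-- The choice operator: identity on nonempty multisets, arbitrary singleton on the empty one. -/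
def Choice (M M' : List ITy) : Prop :=
  (M ≠ [] ∧ M' = M) ∨ (M = [] ∧ ∃ σ, M' = [σ])

mutual
  /-- Sized typing derivations of system ∩J. -/
  inductive IDer : IEnv → Tm → ITy → ℕ → Prop
    | var (x : ℕ) (σ : ITy) :
        IDer (Function.update envEmpty x [σ]) (.var x) σ 1
    | abs {Γ : IEnv} {x : ℕ} {t : Tm} {σ : ITy} {n : ℕ} :
        IDer Γ t σ n →
        IDer (Function.update Γ x []) (.lam x t) (.arrow (Γ x) σ) (n + 1)
    | app {L : List (List ITy × ITy)} {Mt Mu : List ITy}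
        {Θ Δ Λ : IEnv} {t u r : Tm} {y : ℕ} {σ : ITy} {n₁ n₂ n₃ : ℕ} :
        Choice (L.map fun p => ITy.arrow p.1 p.2) Mt →
        Choice (L.map Prod.fst).flatten Mu →
        IDerM Θ t Mt n₁ →
        IDerM Δ u Mu n₂ →
        Λ y = [] →
        IDer (Function.update Λ y (L.map Prod.snd)) r σ n₃ →
        IDer (envAdd Θ (envAdd Δ Λ)) (.gapp t u y r) σ (1 + n₁ + n₂ + n₃)
  /-- Sized (many)-derivations: multiset conclusions. -/
  inductive IDerM : IEnv → Tm → List ITy → ℕ → Prop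
    | nil (t : Tm) : IDerM envEmpty t [] 0
    | cons {Γ Δ : IEnv} {t : Tm} {σ : ITy} {M : List ITy} {n m : ℕ} :
        IDer Γ t σ n → IDerM Δ t M m → IDerM (envAdd Γ Δ) t (σ :: M) (n + m)
end

/-- Non-erasing dβ-reduction: x ∈ fv(t) and y ∈ fv(r) for the contracted redex. -/
inductive DbetaNE : Tm → Tm → Prop
  | root (D : DCtx) {x : ℕ} {t : Tm} (u : Tm) {y : ℕ} {r : Tm} :
      x ∈ Tm.fv t → y ∈ Tm.fv r →
      DbetaNE (Tm.gapp (D.fill (Tm.lam x t)) u y r)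
              (Tm.sub (Tm.sub u x (D.fill t)) y r)
  | lam (x : ℕ) {t t' : Tm} : DbetaNE t t' → DbetaNE (Tm.lam x t) (Tm.lam x t')
  | gapp₁ {t t'} (u : Tm) (y : ℕ) (r : Tm) :
      DbetaNE t t' → DbetaNE (Tm.gapp t u y r) (Tm.gapp t' u y r)
  | gapp₂ (t : Tm) {u u'} (y : ℕ) (r : Tm) :
      DbetaNE u u' → DbetaNE (Tm.gapp t u y r) (Tm.gapp t u' y r)
  | gapp₃ (t u : Tm) (y : ℕ) {r r'} :
      DbetaNE r r' → DbetaNE (Tm.gapp t u y r) (Tm.gapp t u y r')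

/-- Freshness of a variable for a distant context (capture avoidance). -/
def DCtx.Fresh : DCtx → ℕ → Prop
  | .hole, _ => True
  | .gapp s u y D, x => x ∉ Tm.fv s ∧ x ∉ Tm.fv u ∧ x ≠ y ∧ D.Fresh x

/-- β-reduction of ΛJ: (λx.t)(u, y.r) → [[u/x]t/y]r, closed under contexts. -/
inductive JBeta : Tm → Tm → Prop
  | root (x : ℕ) (t u : Tm) (y : ℕ) (r : Tm) :
      JBeta (Tm.gapp (Tm.lam x t) u y r) (Tm.sub (Tm.sub u x t) y r)
  | lam (x : ℕ) {t t' : Tm} : JBeta t t' → JBeta (Tm.lam x t) (Tm.lam x t')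
  | gapp₁ {t t'} (u : Tm) (y : ℕ) (r : Tm) :
      JBeta t t' → JBeta (Tm.gapp t u y r) (Tm.gapp t' u y r)
  | gapp₂ (t : Tm) {u u'} (y : ℕ) (r : Tm) :
      JBeta u u' → JBeta (Tm.gapp t u y r) (Tm.gapp t u' y r)
  | gapp₃ (t u : Tm) (y : ℕ) {r r'} :
      JBeta r r' → JBeta (Tm.gapp t u y r) (Tm.gapp t u y r')

/-- π-reduction of ΛJ: t(u, x.r)(u', y.r') → t(u, x.r(u', y.r')), closed under contexts. -/
inductive JPi : Tm → Tm → Prop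
  | root (t u : Tm) (x : ℕ) (r u' : Tm) (y : ℕ) (r' : Tm) :
      JPi (Tm.gapp (Tm.gapp t u x r) u' y r') (Tm.gapp t u x (Tm.gapp r u' y r'))
  | lam (x : ℕ) {t t' : Tm} : JPi t t' → JPi (Tm.lam x t) (Tm.lam x t')
  | gapp₁ {t t'} (u : Tm) (y : ℕ) (r : Tm) :
      JPi t t' → JPi (Tm.gapp t u y r) (Tm.gapp t' u y r)
  | gapp₂ (t : Tm) {u u'} (y : ℕ) (r : Tm) :
      JPi u u' → JPi (Tm.gapp t u y r) (Tm.gapp t u' y r)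
  | gapp₃ (t u : Tm) (y : ℕ) {r r'} :
      JPi r r' → JPi (Tm.gapp t u y r) (Tm.gapp t u y r')

/-! Typing in ∩J is relevant: an environment is empty outside the free variables of the term.
As `x` is free neither in `s` nor in `u`, the derivations of `s` and `u` in `s(u, y.λx.r)`
leave `x` untyped, so on both sides the domain of the arrow type is the multiset that the
derivation of `r` assigns to `x`, and the `(abs)` step adds the same `1` to the size wherever
it is performed. Thus each step `s(u, y.λx.r) ↔ λx.s(u, y.r)` preserves typing and size, and
`D` is traversed by congruence. -/

namespace IEnv

/- `IEnv` is a plain definition, so the `Function.update` lemmas do not unify with updates of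
environments at reducible transparency (and `rw` rejects many motives mixing `envAdd` and
`Function.update`); hence these restatements and `IDer.cast` below. -/
theorem update_self (Γ : IEnv) (x : ℕ) (M : List ITy) : Function.update Γ x M x = M :=
  Function.update_self x M Γ

theorem update_of_ne {Γ : IEnv} {x z : ℕ} (h : z ≠ x) (M : List ITy) :
    Function.update Γ x M z = Γ z :=
  Function.update_of_ne h M Γ

theorem update_idem (Γ : IEnv) (x : ℕ) (M M' : List ITy) :
    Function.update (Function.update Γ x M) x M' = Function.update Γ x M' :=
  Function.update_idem (β := fun _ => List ITy) M M' Γ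

theorem update_eq_self {Γ : IEnv} {x : ℕ} {M : List ITy} (h : Γ x = M) :
    Function.update Γ x M = Γ := by
  subst h; exact Function.update_eq_self x Γ

theorem update_comm {x y : ℕ} (h : x ≠ y) (M N : List ITy) (Γ : IEnv) :
    Function.update (Function.update Γ x M) y N = Function.update (Function.update Γ y N) x M :=
  Function.update_comm h M N Γ

end IEnv

theorem envAdd_apply (Γ Δ : IEnv) (z : ℕ) : envAdd Γ Δ z = Γ z ++ Δ z := rfl

theorem envAdd_envAdd_apply_of_eq_nil {Θ Δ : IEnv} {x : ℕ} (hΘ : Θ x = []) (hΔ : Δ x = [])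
    (Λ : IEnv) : envAdd Θ (envAdd Δ Λ) x = Λ x := by
  rw [envAdd_apply, envAdd_apply, hΘ, hΔ]; rfl

mutual
theorem IDer.apply_eq_nil_of_not_mem_fv {Γ : IEnv} {t : Tm} {σ : ITy} {n : ℕ}
    (h : IDer Γ t σ n) {z : ℕ} (hz : z ∉ t.fv) : Γ z = [] := by
  cases h with
  | var x σ =>
    rw [Tm.fv, Finset.mem_singleton] at hz
    rw [IEnv.update_of_ne hz]; rfl
  | @abs Γ' x t' σ' m h' =>
    by_cases hzx : z = x
    · subst hzx; exact IEnv.update_self ..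
    · rw [IEnv.update_of_ne hzx]
      exact h'.apply_eq_nil_of_not_mem_fv fun hz' => hz (by simp [Tm.fv, hz', hzx])
  | @app L _ _ _ _ _ _ _ _ y _ _ _ _ _ _ hΘ hΔ hΛy hr =>
    simp only [Tm.fv, Finset.mem_union, Finset.mem_sdiff, Finset.mem_singleton, not_or,
      not_and_or, not_not] at hz
    obtain ⟨⟨hzt, hzu⟩, hzr⟩ := hz
    rw [envAdd_apply, envAdd_apply, hΘ.apply_eq_nil_of_not_mem_fv hzt,
      hΔ.apply_eq_nil_of_not_mem_fv hzu]
    by_cases hzy : z = y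
    · subst hzy; exact hΛy
    · have := hr.apply_eq_nil_of_not_mem_fv (hzr.resolve_right hzy)
      rwa [IEnv.update_of_ne hzy] at this
theorem IDerM.apply_eq_nil_of_not_mem_fv {Γ : IEnv} {t : Tm} {M : List ITy} {n : ℕ}
    (h : IDerM Γ t M n) {z : ℕ} (hz : z ∉ t.fv) : Γ z = [] := by
  cases h with
  | nil => rfl
  | cons h₁ h₂ =>
    rw [envAdd_apply, h₁.apply_eq_nil_of_not_mem_fv hz, h₂.apply_eq_nil_of_not_mem_fv hz]; rfl
end

theorem envAdd_envAdd_update_of_eq_nil {Θ Δ : IEnv} {x : ℕ} (hΘ : Θ x = []) (hΔ : Δ x = [])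
    (Λ : IEnv) (M : List ITy) :
    envAdd Θ (envAdd Δ (Function.update Λ x M)) =
      Function.update (envAdd Θ (envAdd Δ Λ)) x M := by
  funext z
  change Θ z ++ (Δ z ++ Function.update Λ x M z) = _
  by_cases hzx : z = x
  · subst hzx; rw [hΘ, hΔ, IEnv.update_self, IEnv.update_self]; rfl
  · rw [IEnv.update_of_ne hzx, IEnv.update_of_ne hzx]; rfl

theorem IDer.cast {Γ Γ' : IEnv} {t : Tm} {σ σ' : ITy} {n n' : ℕ} (h : IDer Γ t σ n)
    (hΓ : Γ = Γ') (hσ : σ = σ') (hn : n = n') : IDer Γ' t σ' n' := by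
  subst hΓ hσ hn; exact h

theorem IDer.lam_inv {Γ : IEnv} {x : ℕ} {t : Tm} {τ : ITy} {n : ℕ}
    (h : IDer Γ (.lam x t) τ n) :
    ∃ Γ' σ m, IDer Γ' t σ m ∧ Γ = Function.update Γ' x [] ∧ τ = .arrow (Γ' x) σ ∧
      n = m + 1 := by
  cases h with
  | abs h' => exact ⟨_, _, _, h', rfl, rfl, rfl⟩

theorem IDer.gapp_congr_body {Γ : IEnv} {s u : Tm} {y : ℕ} {r r' : Tm} {σ : ITy} {n : ℕ}
    (h : ∀ Γ σ n, IDer Γ r σ n ↔ IDer Γ r' σ n) :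
    IDer Γ (.gapp s u y r) σ n ↔ IDer Γ (.gapp s u y r') σ n := by
  constructor
  · intro h'
    cases h' with
    | app hMt hMu hs hu hΛy hr => exact .app hMt hMu hs hu hΛy ((h _ _ _).mp hr)
  · intro h'
    cases h' with
    | app hMt hMu hs hu hΛy hr => exact .app hMt hMu hs hu hΛy ((h _ _ _).mpr hr)

theorem IDer.gapp_lam_iff_lam_gapp {Γ : IEnv} {s u : Tm} {y x : ℕ} {r : Tm} {σ : ITy} {n : ℕ}
    (hs : x ∉ s.fv) (hu : x ∉ u.fv) (hxy : x ≠ y) :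
    IDer Γ (.gapp s u y (.lam x r)) σ n ↔ IDer Γ (.lam x (.gapp s u y r)) σ n := by
  constructor
  · intro h
    cases h with
    | @app L _ _ Θ Δ Λ _ _ _ _ _ _ _ _ hMt hMu hΘ hΔ hΛy hr =>
    have hΘx := hΘ.apply_eq_nil_of_not_mem_fv hs
    have hΔx := hΔ.apply_eq_nil_of_not_mem_fv hu
    obtain ⟨Γ', τ, m, hbody, hΛ, rfl, rfl⟩ := hr.lam_inv
    have hΓ'y : Γ' y = L.map Prod.snd := by
      have := congrFun hΛ y
      rwa [IEnv.update_self, IEnv.update_of_ne hxy.symm, eq_comm] at this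
    have hΛ_eq : Function.update (Function.update Γ' y []) x [] = Λ := by
      rw [IEnv.update_comm hxy.symm, ← hΛ, IEnv.update_idem, IEnv.update_eq_self hΛy]
    subst hΛ_eq
    -- `Γ'` already types `y` by the codomains of `L`; the new body environment is `Γ'` minus `y`.
    have hΓ' := ((IEnv.update_idem Γ' y [] _).trans (IEnv.update_eq_self hΓ'y)).symm
    have habs := (IDer.app hMt hMu hΘ hΔ (IEnv.update_self Γ' y [])
      (hbody.cast hΓ' rfl rfl)).abs (x := x)
    refine habs.cast (envAdd_envAdd_update_of_eq_nil hΘx hΔx _ _).symm ?_ (by omega)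
    exact congrArg (ITy.arrow · τ) ((envAdd_envAdd_apply_of_eq_nil hΘx hΔx _).trans
      (IEnv.update_of_ne hxy _))
  · intro h
    obtain ⟨Γ', τ, m, hgapp, rfl, rfl, rfl⟩ := h.lam_inv
    cases hgapp with
    | @app L _ _ Θ Δ Λ _ _ _ _ _ _ _ _ hMt hMu hΘ hΔ hΛy hr =>
    have hΘx := hΘ.apply_eq_nil_of_not_mem_fv hs
    have hΔx := hΔ.apply_eq_nil_of_not_mem_fv hu
    have happ : IDer (envAdd Θ (envAdd Δ (Function.update Λ x []))) (.gapp s u y (.lam x r))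
        (.arrow (Function.update Λ y (L.map Prod.snd) x) τ) _ :=
      .app hMt hMu hΘ hΔ (by rwa [IEnv.update_of_ne hxy.symm])
        ((hr.abs (x := x)).cast (IEnv.update_comm hxy.symm ..) rfl rfl)
    refine happ.cast (envAdd_envAdd_update_of_eq_nil hΘx hΔx _ _) ?_ (by omega)
    rw [IEnv.update_of_ne hxy, envAdd_envAdd_apply_of_eq_nil hΘx hΔx]

theorem abstraction_permutation_preserves_typing {Γ : IEnv} (D : DCtx) {x : ℕ}
    {t : Tm} {σ : ITy} {n : ℕ} (hfresh : D.Fresh x) :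
    IDer Γ (D.fill (Tm.lam x t)) σ n ↔ IDer Γ (Tm.lam x (D.fill t)) σ n := by
  induction D generalizing Γ σ n with
  | hole => exact Iff.rfl
  | gapp s u y D ih =>
    obtain ⟨hs, hu, hxy, hD⟩ := hfresh
    exact (IDer.gapp_congr_body fun _ _ _ => ih hD).trans (IDer.gapp_lam_iff_lam_gapp hs hu hxy)
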